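/- Let Q = ((4, 10), (10, 18)) (discriminant 28). The matrices M1 = ((23, 88), (-6, -23)) and M2 = ((-7, -8), (6, 7)) are both involutive isometries of Q (i.e. Mi^T Q Mi = Q and Mi^2 = I for i = 1, 2), and their product M1·M2 has infinite order. -/
import Mathlib

private def pseq : ℕ → ℤ
  | 0 => 0
  | 1 => 1
  | (n+2) => 254 * pseq (n+1) - pseq n

private lemma pseq_pos : ∀ n : ℕ, pseq n < pseq (n+1) ∧ 0 ≤ pseq n := by
  intro n
  induction n with
  | zero => simp [pseq]
  | succ k ih =>
    obtain ⟨h1, h2⟩ := ih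
    refine ⟨?_, by omega⟩
    show pseq (k+1) < 254 * pseq (k+1) - pseq k
    omega

private lemma key : ∀ n : ℕ,
    (!![(367:ℤ), 432; -96, -113]) ^ (n+1) =
      !![367 * pseq (n+1) - pseq n, 432 * pseq (n+1);
         -96 * pseq (n+1), -113 * pseq (n+1) - pseq n] := by
  intro n
  induction n with
  | zero => norm_num [pseq]
  | succ k ih =>
    rw [pow_succ, ih]
    have hrec : pseq (k+2) = 254 * pseq (k+1) - pseq k := rfl
    ext i j
    fin_cases i <;> fin_cases j <;>
      simp [Matrix.mul_apply, Fin.sum_univ_two, hrec] <;> ring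

theorem stmt_13 :
    let Q : Matrix (Fin 2) (Fin 2) ℤ := !![4, 10; 10, 18]
    let M1 : Matrix (Fin 2) (Fin 2) ℤ := !![23, 88; -6, -23]
    let M2 : Matrix (Fin 2) (Fin 2) ℤ := !![-7, -8; 6, 7]
    M1.transpose * Q * M1 = Q ∧ M1 ^ 2 = 1 ∧
    M2.transpose * Q * M2 = Q ∧ M2 ^ 2 = 1 ∧
    (∀ n : ℕ, n ≠ 0 → (M1 * M2) ^ n ≠ 1) := by
  intro Q M1 M2
  refine ⟨by decide, by decide, by decide, by decide, ?_⟩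
  intro n hn heq
  obtain ⟨m, rfl⟩ := Nat.exists_eq_succ_of_ne_zero hn
  have hM : M1 * M2 = !![(367:ℤ), 432; -96, -113] := by decide
  rw [hM, key m] at heq
  have h1 : (432 : ℤ) * pseq (m+1) = 0 := by
    have := congrFun (congrFun heq 0) 1
    simpa using this
  have h2 : 0 < pseq (m+1) := by
    have := pseq_pos m
    have := pseq_pos 0
    induction m with
    | zero => simp [pseq]
    | succ k _ =>
      have a := (pseq_pos (k+1)).1
      have b := (pseq_pos (k+1)).2
      have c := (pseq_pos k).1
      omega
  omega
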